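/- Let α ∈ (0,1) and let h : (0,∞) → ℝ be defined by h(k) = (e^{4k} − 1) / (k [e^{4k} + 1 + 2 e^{2k} cos(2k tan(πα/4))]). Then h is uniformly bounded on (0,∞): there exists C > 0 such that 0 ≤ h(k) ≤ C for all k > 0. -/

import Mathlib

/-!
Write `E = e^{2k}`, so that `h(k) = (E² - 1) / (k D)` with `D = E² + 1 + 2E cos(2kt)` and
`t = tan(πα/4) ∈ [0, 1]`. Always `D ≥ (E - 1)²`, and `E - 1 ≥ 2k` gives `h(k) ≤ (1 + 1/k)/k`,
which is at most `6` for `k ≥ 1/2`. For `k ≤ 1/2` the angle `2kt` lies in `[0, 1]`, so the cosine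
is nonnegative and `D ≥ E² + 1 ≥ (E + 1)²/2`; together with `E - 1 ≤ 2kE` this gives `h(k) ≤ 4`.
-/

open Real

/-- The auxiliary function `h(k)` arising in the bound of the `L²` norm of the
frequency-domain Green function. -/
noncomputable def hAux (α k : ℝ) : ℝ :=
  (Real.exp (4 * k) - 1) /
    (k * (Real.exp (4 * k) + 1
      + 2 * Real.exp (2 * k) * Real.cos (2 * k * Real.tan (Real.pi * α / 4))))

lemma Real.exp_sub_one_le_mul_exp (x : ℝ) : exp x - 1 ≤ x * exp x := by
  have h := mul_le_mul_of_nonneg_right (one_sub_le_exp_neg x) (exp_pos x).le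
  rw [← exp_add, neg_add_cancel, exp_zero, sub_mul, one_mul] at h
  linarith

lemma Real.tan_pi_mul_div_four_mem_Icc {α : ℝ} (hα : α ∈ Set.Icc (0 : ℝ) 1) :
    tan (π * α / 4) ∈ Set.Icc (0 : ℝ) 1 := by
  obtain ⟨hα0, hα1⟩ := hα
  have hπ := pi_pos
  refine ⟨tan_nonneg_of_nonneg_of_le_pi_div_two (by positivity) (by nlinarith), ?_⟩
  rw [← tan_pi_div_four]
  exact strictMonoOn_tan.monotoneOn ⟨by nlinarith, by nlinarith⟩ ⟨by linarith, by linarith⟩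
    (by nlinarith)

lemma hAux_eq_div_exp_two_mul (α k : ℝ) :
    hAux α k = (exp (2 * k) ^ 2 - 1) /
      (k * (exp (2 * k) ^ 2 + 1 + 2 * exp (2 * k) * cos (2 * k * tan (π * α / 4)))) := by
  rw [hAux, ← exp_nat_mul]
  ring_nf

section

variable {k c : ℝ}

lemma exp_two_mul_sub_one_sq_le (k : ℝ) (hc : -1 ≤ c) :
    (exp (2 * k) - 1) ^ 2 ≤ exp (2 * k) ^ 2 + 1 + 2 * exp (2 * k) * c := by
  nlinarith [exp_pos (2 * k)]

lemma exp_two_mul_sq_add_one_add_mul_pos (hk : 0 < k) (hc : -1 ≤ c) :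
    0 < exp (2 * k) ^ 2 + 1 + 2 * exp (2 * k) * c := by
  have hE : 1 < exp (2 * k) := one_lt_exp_iff.mpr (by positivity)
  exact (pow_pos (sub_pos.mpr hE) 2).trans_le (exp_two_mul_sub_one_sq_le k hc)

end

section

variable (α : ℝ) {k : ℝ}

lemma hAux_nonneg (hk : 0 < k) : 0 ≤ hAux α k := by
  rw [hAux_eq_div_exp_two_mul]
  have hE : 1 ≤ exp (2 * k) := one_le_exp (by positivity)
  exact div_nonneg (by nlinarith)
    (mul_nonneg hk.le (exp_two_mul_sq_add_one_add_mul_pos hk (neg_one_le_cos _)).le)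

lemma hAux_le_one_add_inv_div (hk : 0 < k) : hAux α k ≤ (1 + k⁻¹) / k := by
  have hD := exp_two_mul_sub_one_sq_le k (neg_one_le_cos (2 * k * tan (π * α / 4)))
  have hDpos := exp_two_mul_sq_add_one_add_mul_pos hk (neg_one_le_cos (2 * k * tan (π * α / 4)))
  rw [hAux_eq_div_exp_two_mul, div_le_div_iff₀ (mul_pos hk hDpos) hk]
  set E := exp (2 * k)
  have hE : 2 * k ≤ E - 1 := by linarith [add_one_le_exp (2 * k)]
  have hEk : E + 1 ≤ (1 + k⁻¹) * (E - 1) := by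
    have : 2 ≤ k⁻¹ * (E - 1) := by rw [inv_mul_eq_div, le_div_iff₀ hk]; linarith
    linarith [show (1 + k⁻¹) * (E - 1) = (E - 1) + k⁻¹ * (E - 1) by ring]
  calc (E ^ 2 - 1) * k = (E + 1) * (E - 1) * k := by ring
    _ ≤ (1 + k⁻¹) * (E - 1) * (E - 1) * k := by gcongr; linarith
    _ = (1 + k⁻¹) * (k * (E - 1) ^ 2) := by ring
    _ ≤ (1 + k⁻¹) * (k * _) := by gcongr

lemma hAux_le_four_of_cos_nonneg (hk : 0 < k)
    (hcos : 0 ≤ cos (2 * k * tan (π * α / 4))) : hAux α k ≤ 4 := by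
  rw [hAux_eq_div_exp_two_mul]
  set E := exp (2 * k)
  have hE : 0 < E := exp_pos _
  have hEk : E - 1 ≤ 2 * k * E := exp_sub_one_le_mul_exp _
  rw [div_le_iff₀ (by positivity)]
  calc E ^ 2 - 1 = (E - 1) * (E + 1) := by ring
    _ ≤ 2 * k * E * (E + 1) := by gcongr
    _ ≤ 4 * (k * (E ^ 2 + 1)) := by nlinarith [sq_nonneg (E - 1)]
    _ ≤ 4 * (k * _) := by gcongr 4 * (k * ?_); exact le_add_of_nonneg_right (by positivity)

end

/-- For `α ∈ (0,1)`, the function `h` is uniformly bounded on `(0,∞)`: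
there exists `C > 0` with `0 ≤ h(k) ≤ C` for all `k > 0`. -/
theorem hAux_uniformly_bounded (α : ℝ) (hα : α ∈ Set.Ioo (0:ℝ) 1) :
    ∃ C > 0, ∀ k : ℝ, 0 < k → 0 ≤ hAux α k ∧ hAux α k ≤ C := by
  obtain ⟨ht0, ht1⟩ := tan_pi_mul_div_four_mem_Icc (Set.Ioo_subset_Icc_self hα)
  refine ⟨6, by norm_num, fun k hk => ⟨hAux_nonneg α hk, ?_⟩⟩
  rcases le_or_gt k (1 / 2) with hsmall | hlarge
  · have hcos : 0 ≤ cos (2 * k * tan (π * α / 4)) :=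
      cos_nonneg_of_mem_Icc ⟨by nlinarith [pi_gt_three], by nlinarith [pi_gt_three]⟩
    exact (hAux_le_four_of_cos_nonneg α hk hcos).trans (by norm_num)
  · calc hAux α k ≤ (1 + k⁻¹) / k := hAux_le_one_add_inv_div α hk
      _ ≤ (1 + 2) / (1 / 2) := by
        gcongr
        exact (inv_le_comm₀ hk (by norm_num)).mpr (by linarith)
      _ = 6 := by norm_num
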